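/- Fix constants κ > 0 and η > 0 and let X have the cumulative distribution function F(x) = [1 − e^{2e + κ} x^{−2} e^{−κ (log log x)^η}] · 1(x ≥ e^e). Then for every x ≥ e^e, the truncated second moment D(x) = ∫_{|y|<x} y² dF(y) satisfies D(x) = e^{2e} [ 1 − e^{κ − κ(log log x)^η} + (2 e^{κ}/(η κ^{1/η})) ∫_{κ}^{κ(log log x)^η} z^{1/η − 1} e^{−z + (z/κ)^{1/η}} dz ]. -/

import Mathlib

open MeasureTheory ProbabilityTheory Filter

noncomputable section

/-- The distribution function
`F(x) = [1 − e^{2e+κ} x^{−2} e^{−κ(log log x)^η}] · 1(x ≥ e^e)`. -/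
def Fdist (κ η : ℝ) (x : ℝ) : ℝ :=
  if Real.exp (Real.exp 1) ≤ x then
    1 - Real.exp (2 * Real.exp 1 + κ) / x ^ 2 *
      Real.exp (-κ * Real.log (Real.log x) ^ η)
  else 0

/-- The truncated second moment `D(x) = ∫_{|y|<x} y² dF(y)`. -/
def truncVar (μ : Measure ℝ) (x : ℝ) : ℝ :=
  ∫ y in Set.Ioo (-x) x, y ^ 2 ∂μ

section Aux
open Real Set MeasureTheory intervalIntegral
open scoped NNReal ENNReal

namespace TSM

def A : ℝ := Real.exp (Real.exp 1)

lemma A_pos : 0 < A := Real.exp_pos _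
lemma one_lt_A : 1 < A := Real.one_lt_exp_iff.mpr (Real.exp_pos 1)

lemma log_ge {x : ℝ} (hx : A ≤ x) : Real.exp 1 ≤ Real.log x := by
  have := Real.log_le_log (Real.exp_pos _) hx
  rwa [Real.log_exp] at this

lemma log_pos' {x : ℝ} (hx : A ≤ x) : 0 < Real.log x :=
  lt_of_lt_of_le (Real.exp_pos 1) (log_ge hx)

lemma loglog_ge {x : ℝ} (hx : A ≤ x) : 1 ≤ Real.log (Real.log x) := by
  have h := Real.log_le_log (Real.exp_pos 1) (log_ge hx)
  rwa [Real.log_exp] at h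

lemma loglog_pos {x : ℝ} (hx : A ≤ x) : 0 < Real.log (Real.log x) :=
  lt_of_lt_of_le one_pos (loglog_ge hx)

lemma x_pos {x : ℝ} (hx : A ≤ x) : 0 < x := lt_trans one_pos (lt_of_lt_of_le one_lt_A hx)

/-- log-log of x -/
def L (x : ℝ) : ℝ := Real.log (Real.log x)

lemma L_A : L A = 1 := by
  rw [L, A, Real.log_exp, Real.log_exp]


/-- the density of the law on `(A, ∞)` -/
def g (κ η x : ℝ) : ℝ :=
  Real.exp (2 * Real.exp 1 + κ) * Real.exp (-κ * L x ^ η) *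
    (2 / x ^ 3 + κ * η * L x ^ (η - 1) / (x ^ 3 * Real.log x))

def fdens (κ η x : ℝ) : ℝ := if A < x then g κ η x else 0

def psi (κ η z : ℝ) : ℝ := z ^ (1/η - 1) * Real.exp (-z + (z/κ) ^ (1/η))

lemma hasDerivAt_L_rpow {x : ℝ} (p : ℝ) (hx : A ≤ x) :
    HasDerivAt (fun y => L y ^ p) ((Real.log x)⁻¹ * x⁻¹ * p * L x ^ (p - 1)) x := by
  have hx0 := x_pos hx; have hlog := log_pos' hx; have hL := loglog_pos hx
  have h3 : HasDerivAt Real.log x⁻¹ x := Real.hasDerivAt_log hx0.ne'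
  have h4 : HasDerivAt (fun y => Real.log (Real.log y)) ((Real.log x)⁻¹ * x⁻¹) x :=
    (Real.hasDerivAt_log hlog.ne').comp x h3
  exact h4.rpow_const (Or.inl hL.ne')

lemma hasDerivAt_Fdist {κ η : ℝ} {x : ℝ} (hx : A < x) :
    HasDerivAt (Fdist κ η) (g κ η x) x := by
  have hx0 := x_pos hx.le; have hlog := log_pos' hx.le; have hL := loglog_pos hx.le
  set C := Real.exp (2 * Real.exp 1 + κ) with hC
  have h1 : HasDerivAt (fun y : ℝ => y ^ 2) (2 * x) x := by
    simpa using hasDerivAt_pow 2 x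
  have h2 : HasDerivAt (fun y : ℝ => C / y ^ 2)
      ((0 * x ^ 2 - C * (2 * x)) / (x ^ 2) ^ 2) x :=
    (hasDerivAt_const x C).div h1 (pow_ne_zero 2 hx0.ne')
  have h5 := hasDerivAt_L_rpow η hx.le
  have h6 : HasDerivAt (fun y => -κ * L y ^ η)
      (-κ * ((Real.log x)⁻¹ * x⁻¹ * η * L x ^ (η - 1))) x := h5.const_mul (-κ)
  have h7 := h6.exp
  have h8 := h2.mul h7
  have hφ := (hasDerivAt_const x (1:ℝ)).sub h8
  have hev : (fun y => 1 - C / y ^ 2 * Real.exp (-κ * L y ^ η)) =ᶠ[nhds x] Fdist κ η := by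
    filter_upwards [isOpen_Ioi.mem_nhds hx] with y hy
    have hy' : Real.exp (Real.exp 1) ≤ y := le_of_lt hy
    rw [Fdist, if_pos hy']
    rfl
  refine (hφ.congr_of_eventuallyEq hev.symm).congr_deriv ?_
  rw [g]
  field_simp
  ring

lemma contOn_log : ContinuousOn Real.log (Ici A) :=
  fun x hx => (Real.continuousAt_log (x_pos hx).ne').continuousWithinAt

lemma contOn_L_rpow (p : ℝ) : ContinuousOn (fun x => L x ^ p) (Ici A) := by
  intro x hx
  have hx0 := x_pos hx; have hlog := log_pos' hx; have hL := loglog_pos hx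
  have c1 : ContinuousAt Real.log x := Real.continuousAt_log hx0.ne'
  have c2 : ContinuousAt (fun y => Real.log (Real.log y)) x :=
    (Real.continuousAt_log hlog.ne').comp c1
  have c3 : ContinuousAt (fun t : ℝ => t ^ p) (L x) :=
    Real.continuousAt_rpow_const _ _ (Or.inl hL.ne')
  exact (c3.comp c2).continuousWithinAt

lemma contOn_expL (κ η : ℝ) : ContinuousOn (fun x => Real.exp (-κ * L x ^ η)) (Ici A) :=
  Real.continuous_exp.comp_continuousOn (continuousOn_const.mul (contOn_L_rpow η))

lemma contOn_g (κ η : ℝ) : ContinuousOn (g κ η) (Ici A) := by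
  have hx3 : ∀ x ∈ Ici A, (x : ℝ) ^ 3 ≠ 0 := fun x hx => pow_ne_zero 3 (x_pos hx).ne'
  refine (continuousOn_const.mul (contOn_expL κ η)).mul ?_
  refine ContinuousOn.add ?_ ?_
  · exact continuousOn_const.div (continuousOn_pow 3) hx3
  · refine (continuousOn_const.mul (contOn_L_rpow (η-1))).div
      ((continuousOn_pow 3).mul contOn_log) ?_
    exact fun x hx => mul_ne_zero (hx3 x hx) (log_pos' hx).ne'

lemma contAt_psi {κ η z : ℝ} (hκ : 0 < κ) (hz : 0 < z) : ContinuousAt (psi κ η) z := by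
  have c1 : ContinuousAt (fun t : ℝ => t ^ (1/η - 1)) z :=
    Real.continuousAt_rpow_const _ _ (Or.inl hz.ne')
  have c2 : ContinuousAt (fun t : ℝ => (t / κ) ^ (1/η)) z := by
    have c0 : ContinuousAt (fun t : ℝ => t / κ) z := continuousAt_id.div_const κ
    exact c0.rpow_const (Or.inl (div_pos hz hκ).ne')
  exact c1.mul (Real.continuous_exp.continuousAt.comp ((continuousAt_id.neg).add c2))

lemma contOn_psi {κ η : ℝ} (hκ : 0 < κ) : ContinuousOn (psi κ η) (Ioi 0) :=
  fun _ hz => (contAt_psi hκ hz).continuousWithinAt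

lemma g_nonneg {κ η x : ℝ} (hκ : 0 < κ) (hη : 0 < η) (hx : A ≤ x) : 0 ≤ g κ η x := by
  have hx0 := x_pos hx; have hlog := log_pos' hx; have hL := loglog_pos hx
  have h1 : (0:ℝ) ≤ L x ^ (η - 1) := Real.rpow_nonneg hL.le _
  have := Real.exp_pos (2 * Real.exp 1 + κ)
  have := Real.exp_pos (-κ * L x ^ η)
  rw [g]; positivity

lemma fdens_nonneg {κ η : ℝ} (hκ : 0 < κ) (hη : 0 < η) (x : ℝ) : 0 ≤ fdens κ η x := by
  rw [fdens]; split
  · exact g_nonneg hκ hη (by linarith)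
  · exact le_refl 0

lemma fdens_meas (κ η : ℝ) : Measurable (fdens κ η) := by
  have heq : fdens κ η = (Ioi A).piecewise (g κ η) (fun _ => 0) := by
    ext x; by_cases hx : A < x <;> simp [fdens, Set.piecewise, hx]
  rw [heq]
  exact ContinuousOn.measurable_piecewise
    ((contOn_g κ η).mono Ioi_subset_Ici_self) continuous_const.continuousOn measurableSet_Ioi


lemma Fdist_A (κ η : ℝ) : Fdist κ η A = 0 := by
  have hA : A = Real.exp (Real.exp 1) := rfl
  have hle : Real.exp (Real.exp 1) ≤ A := le_rfl
  rw [Fdist, if_pos hle, hA, Real.log_exp, Real.log_exp, Real.one_rpow]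
  have h2 : (Real.exp (Real.exp 1)) ^ 2 = Real.exp (2 * Real.exp 1) := by
    rw [← Real.exp_nat_mul]; norm_num
  rw [h2, div_mul_eq_mul_div, ← Real.exp_add, sub_eq_zero,
    eq_comm, div_eq_one_iff_eq (Real.exp_ne_zero _)]
  ring_nf

lemma integral_g_eq {κ η t : ℝ} (ht : A ≤ t) :
    ∫ y in A..t, g κ η y = Fdist κ η t := by
  have hx2 : ∀ x ∈ Ici A, (x:ℝ) ^ 2 ≠ 0 := fun x hx => pow_ne_zero 2 (x_pos hx).ne'
  have hcont' : ContinuousOn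
      (fun x => 1 - Real.exp (2 * Real.exp 1 + κ) / x ^ 2 *
        Real.exp (-κ * L x ^ η)) (Ici A) :=
    continuousOn_const.sub ((continuousOn_const.div (continuousOn_pow 2) hx2).mul
      (contOn_expL κ η))
  have hcont : ContinuousOn (Fdist κ η) (Icc A t) := by
    refine ContinuousOn.congr (hcont'.mono Icc_subset_Ici_self) ?_
    intro x hx
    have hx' : Real.exp (Real.exp 1) ≤ x := hx.1
    rw [Fdist, if_pos hx']
    rfl
  have hderiv : ∀ x ∈ Ioo A t, HasDerivAt (Fdist κ η) (g κ η x) x :=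
    fun x hx => hasDerivAt_Fdist hx.1
  have hint : IntervalIntegrable (g κ η) volume A t := by
    apply ContinuousOn.intervalIntegrable
    apply (contOn_g κ η).mono
    rw [uIcc_of_le ht]
    exact Icc_subset_Ici_self
  rw [intervalIntegral.integral_eq_sub_of_hasDerivAt_of_le ht hcont hderiv hint,
    Fdist_A, sub_zero]

lemma integrableOn_fdens_Iic {κ η : ℝ} (t : ℝ) :
    IntegrableOn (fdens κ η) (Iic t) := by
  by_cases ht : A ≤ t
  · have h1 : IntegrableOn (fdens κ η) (Iic A) := by
      refine (integrableOn_zero).congr_fun ?_ measurableSet_Iic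
      intro x hx
      exact (if_neg (not_lt.2 hx)).symm
    have h2 : IntegrableOn (fdens κ η) (Ioc A t) := by
      have hg : IntegrableOn (g κ η) (Ioc A t) :=
        (((contOn_g κ η).mono (fun x hx => hx.1)).integrableOn_Icc).mono_set
          Ioc_subset_Icc_self
      refine hg.congr_fun ?_ measurableSet_Ioc
      intro x hx
      exact (if_pos hx.1).symm
    simpa [Set.Iic_union_Ioc_eq_Iic ht] using h1.union h2
  · refine (integrableOn_zero).congr_fun ?_ measurableSet_Iic
    intro x hx
    exact (if_neg (fun h => ht (le_trans h.le hx))).symm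

lemma integral_fdens_Iic {κ η : ℝ} (t : ℝ) :
    ∫ y in Iic t, fdens κ η y = Fdist κ η t := by
  by_cases ht : A ≤ t
  · rw [← Set.Iic_union_Ioc_eq_Iic ht,
      setIntegral_union (Set.Iic_disjoint_Ioc le_rfl) measurableSet_Ioc
        ((integrableOn_fdens_Iic A)) (((integrableOn_fdens_Iic t)).mono_set
          (fun x hx => le_trans hx.2 le_rfl : Ioc A t ⊆ Iic t))]
    have h1 : ∫ y in Iic A, fdens κ η y = 0 := by
      apply setIntegral_eq_zero_of_forall_eq_zero
      intro x hx
      exact if_neg (not_lt.2 hx)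
    have h2 : ∫ y in Ioc A t, fdens κ η y = ∫ y in Ioc A t, g κ η y := by
      apply setIntegral_congr_fun measurableSet_Ioc
      intro x hx
      exact if_pos hx.1
    rw [h1, h2, zero_add, ← intervalIntegral.integral_of_le ht, integral_g_eq ht]
  · have h1 : ∫ y in Iic t, fdens κ η y = 0 := by
      apply setIntegral_eq_zero_of_forall_eq_zero
      intro x hx
      exact if_neg (fun h => ht (le_trans h.le hx))
    have ht' : ¬ Real.exp (Real.exp 1) ≤ t := ht
    rw [h1, Fdist, if_neg ht']

lemma law_eq {κ η : ℝ} (hκ : 0 < κ) (hη : 0 < η) (μ : Measure ℝ) [IsProbabilityMeasure μ]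
    (hcdf : ∀ x : ℝ, (μ (Set.Iic x)).toReal = Fdist κ η x) :
    μ = volume.withDensity (fun x => ENNReal.ofReal (fdens κ η x)) := by
  refine MeasureTheory.Measure.ext_of_Iic μ _ (fun t => ?_)
  rw [← ENNReal.ofReal_toReal (measure_ne_top μ (Iic t)), hcdf t,
    withDensity_apply _ measurableSet_Iic,
    ← MeasureTheory.ofReal_integral_eq_lintegral_ofReal (integrableOn_fdens_Iic t)
      (Filter.Eventually.of_forall (fun x => fdens_nonneg hκ hη x)),
    integral_fdens_Iic]


def Jint (κ η u : ℝ) : ℝ := ∫ z in κ..u, psi κ η z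

def Hfun (κ η x : ℝ) : ℝ :=
  Real.exp (2 * Real.exp 1) *
    (1 - Real.exp (κ - κ * L x ^ η) +
      2 * Real.exp κ / (η * κ ^ (1/η)) * Jint κ η (κ * L x ^ η))

lemma Hfun_A (κ η : ℝ) : Hfun κ η A = 0 := by
  rw [Hfun, L_A, Real.one_rpow, mul_one, Jint, intervalIntegral.integral_same]
  simp

lemma one_le_Lrpow {η y : ℝ} (hη : 0 < η) (hy : A ≤ y) : 1 ≤ L y ^ η := by
  rw [← Real.one_rpow η]
  exact Real.rpow_le_rpow one_pos.le (loglog_ge hy) hη.le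

lemma hasDerivAt_H {κ η y : ℝ} (hκ : 0 < κ) (hη : 0 < η) (hy : A ≤ y) :
    HasDerivAt (Hfun κ η) (y ^ 2 * g κ η y) y := by
  have hy0 := x_pos hy
  have hlog := log_pos' hy
  have hL : 0 < L y := loglog_pos hy
  set u : ℝ := κ * L y ^ η with hu_def
  have h1L : 1 ≤ L y ^ η := one_le_Lrpow hη hy
  have hupos : 0 < u := mul_pos hκ (lt_of_lt_of_le one_pos h1L)
  have hκu : κ ≤ u := le_mul_of_one_le_right hκ.le h1L
  have hu : HasDerivAt (fun x => κ * L x ^ η)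
      (κ * ((Real.log y)⁻¹ * y⁻¹ * η * L y ^ (η - 1))) y :=
    (hasDerivAt_L_rpow η hy).const_mul κ
  have hIntInt : IntervalIntegrable (psi κ η) volume κ u := by
    apply ContinuousOn.intervalIntegrable
    apply (contOn_psi hκ).mono
    rw [uIcc_of_le hκu]
    exact fun z hz => lt_of_lt_of_le hκ hz.1
  have hsmaf : StronglyMeasurableAtFilter (psi κ η) (nhds u) :=
    ⟨Ioi 0, Ioi_mem_nhds hupos, (contOn_psi hκ).aestronglyMeasurable measurableSet_Ioi⟩
  have hJ : HasDerivAt (Jint κ η) (psi κ η u) u :=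
    intervalIntegral.integral_hasDerivAt_right hIntInt hsmaf (contAt_psi hκ hupos)
  have hJu : HasDerivAt (fun x => Jint κ η (κ * L x ^ η))
      (psi κ η u * (κ * ((Real.log y)⁻¹ * y⁻¹ * η * L y ^ (η - 1)))) y :=
    by have := hJ.comp y hu; exact this
  have hexp : HasDerivAt (fun x => Real.exp (κ - κ * L x ^ η))
      (Real.exp (κ - u) * (0 - κ * ((Real.log y)⁻¹ * y⁻¹ * η * L y ^ (η - 1)))) y :=
    ((hasDerivAt_const y κ).sub hu).exp
  have hsum := ((((hasDerivAt_const y (1:ℝ)).sub hexp).add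
      (hJu.const_mul (2 * Real.exp κ / (η * κ ^ (1/η))))).const_mul
      (Real.exp (2 * Real.exp 1)))
  have hq : (0:ℝ) < L y ^ (η - 1) := Real.rpow_pos_of_pos hL _
  have hp : (0:ℝ) < κ ^ (1/η) := Real.rpow_pos_of_pos hκ _
  have hexpL : Real.exp (L y) = Real.log y := Real.exp_log hlog
  have hpsi : psi κ η u =
      (κ ^ (1/η) / κ) * (L y ^ (η - 1))⁻¹ * (Real.exp (-u) * Real.log y) := by
    rw [psi]
    have hdiv : u / κ = L y ^ η := by
      rw [hu_def, mul_comm, mul_div_assoc, div_self hκ.ne', mul_one]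
    have hLpow : (L y ^ η) ^ (1/η) = L y := by
      rw [← Real.rpow_mul hL.le, mul_one_div_cancel hη.ne', Real.rpow_one]
    rw [hdiv, hLpow, Real.exp_add, hexpL]
    have hupow : u ^ (1/η - 1) = (κ ^ (1/η) / κ) * (L y ^ (η - 1))⁻¹ := by
      rw [hu_def, Real.mul_rpow hκ.le (Real.rpow_nonneg hL.le _),
        ← Real.rpow_mul hL.le]
      have he1 : η * (1/η - 1) = -(η - 1) := by field_simp; ring
      rw [he1, Real.rpow_neg hL.le, Real.rpow_sub hκ, Real.rpow_one]
    rw [hupow]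
  have hgex : Real.exp (2 * Real.exp 1 + κ) = Real.exp (2 * Real.exp 1) * Real.exp κ :=
    Real.exp_add _ _
  have hexku : Real.exp (κ - u) = Real.exp κ * Real.exp (-u) := by
    rw [sub_eq_add_neg, Real.exp_add]
  have hmku : -κ * L y ^ η = -u := by rw [hu_def]; ring
  have heq : Real.exp (2 * Real.exp 1) *
      (0 - Real.exp (κ - u) * (0 - κ * ((Real.log y)⁻¹ * y⁻¹ * η * L y ^ (η - 1))) +
        2 * Real.exp κ / (η * κ ^ (1/η)) *
          (psi κ η u * (κ * ((Real.log y)⁻¹ * y⁻¹ * η * L y ^ (η - 1))))) =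
      y ^ 2 * g κ η y := by
    rw [hpsi, hexku, g, hgex, hmku]
    field_simp
    ring
  rw [heq] at hsum
  exact hsum

lemma integral_main {κ η x : ℝ} (hκ : 0 < κ) (hη : 0 < η) (hx : A ≤ x) :
    ∫ y in A..x, y ^ 2 * g κ η y = Hfun κ η x := by
  have hderiv : ∀ y ∈ uIcc A x, HasDerivAt (Hfun κ η) (y ^ 2 * g κ η y) y := by
    intro y hy
    rw [uIcc_of_le hx] at hy
    exact hasDerivAt_H hκ hη hy.1
  have hint : IntervalIntegrable (fun y => y ^ 2 * g κ η y) volume A x := by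
    apply ContinuousOn.intervalIntegrable
    apply ContinuousOn.mul (continuousOn_pow 2)
    apply (contOn_g κ η).mono
    rw [uIcc_of_le hx]
    exact Icc_subset_Ici_self
  rw [intervalIntegral.integral_eq_sub_of_hasDerivAt hderiv hint, Hfun_A, sub_zero]

end TSM

end Aux

open scoped NNReal ENNReal

/-- **Example.** Fix `κ, η > 0` and let `X` have cumulative distribution function
`F(x) = [1 − e^{2e+κ} x^{−2} e^{−κ(log log x)^η}] 1(x ≥ e^e)` (with law `μ`).
Then for every `x ≥ e^e`, the truncated second moment `D(x) = ∫_{|y|<x} y² dF(y)` equals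
`e^{2e} [1 − e^{κ − κ(log log x)^η}
  + (2 e^κ/(η κ^{1/η})) ∫_κ^{κ(log log x)^η} z^{1/η−1} e^{−z + (z/κ)^{1/η}} dz]`. -/
theorem example_truncated_second_moment
    (κ η : ℝ) (hκ : 0 < κ) (hη : 0 < η)
    (μ : Measure ℝ) [IsProbabilityMeasure μ]
    (hcdf : ∀ x : ℝ, (μ (Set.Iic x)).toReal = Fdist κ η x) :
    ∀ x : ℝ, Real.exp (Real.exp 1) ≤ x →
      truncVar μ x =
        Real.exp (2 * Real.exp 1) *
          (1 - Real.exp (κ - κ * Real.log (Real.log x) ^ η) +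
            2 * Real.exp κ / (η * κ ^ (1 / η)) *
              ∫ z in Set.Icc κ (κ * Real.log (Real.log x) ^ η),
                z ^ (1 / η - 1) * Real.exp (-z + (z / κ) ^ (1 / η))) := by
  intro x hx
  have hxA : TSM.A ≤ x := hx
  rw [truncVar, TSM.law_eq hκ hη μ hcdf]
  have hmeas : Measurable (fun y => Real.toNNReal (TSM.fdens κ η y)) :=
    measurable_real_toNNReal.comp (TSM.fdens_meas κ η)
  have hwd : (fun y : ℝ => ENNReal.ofReal (TSM.fdens κ η y))
      = (fun y : ℝ => ((Real.toNNReal (TSM.fdens κ η y) : ℝ≥0) : ℝ≥0∞)) := rfl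
  rw [hwd, setIntegral_withDensity_eq_setIntegral_smul hmeas _ measurableSet_Ioo]
  have h1 : ∀ y : ℝ, (Real.toNNReal (TSM.fdens κ η y) : ℝ≥0) • (y ^ 2) =
      (Set.Ioi TSM.A).indicator (fun y => y ^ 2 * TSM.g κ η y) y := by
    intro y
    rw [NNReal.smul_def, Real.coe_toNNReal _ (TSM.fdens_nonneg hκ hη y)]
    by_cases hy : TSM.A < y
    · rw [Set.indicator_of_mem (show y ∈ Set.Ioi TSM.A from hy), TSM.fdens, if_pos hy, smul_eq_mul]; ring
    · rw [Set.indicator_of_notMem (show y ∉ Set.Ioi TSM.A from hy), TSM.fdens, if_neg hy, smul_eq_mul, zero_mul]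
  simp only [h1]
  rw [setIntegral_indicator measurableSet_Ioi]
  have hset : Set.Ioo (-x) x ∩ Set.Ioi TSM.A = Set.Ioo TSM.A x := by
    have hAx : -x < TSM.A := lt_trans (neg_neg_iff_pos.mpr (TSM.x_pos hxA)) TSM.A_pos
    ext y
    simp only [Set.mem_inter_iff, Set.mem_Ioo, Set.mem_Ioi]
    constructor
    · rintro ⟨⟨_, h2⟩, h3⟩; exact ⟨h3, h2⟩
    · rintro ⟨hy1, hy2⟩; exact ⟨⟨lt_trans hAx hy1, hy2⟩, hy1⟩
  rw [hset, ← MeasureTheory.integral_Ioc_eq_integral_Ioo,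
    ← intervalIntegral.integral_of_le hxA, TSM.integral_main hκ hη hxA]
  have hκu : κ ≤ κ * TSM.L x ^ η :=
    le_mul_of_one_le_right hκ.le (TSM.one_le_Lrpow hη hxA)
  have hIcc : (∫ z in Set.Icc κ (κ * Real.log (Real.log x) ^ η),
      z ^ (1 / η - 1) * Real.exp (-z + (z / κ) ^ (1 / η))) =
      TSM.Jint κ η (κ * TSM.L x ^ η) := by
    rw [TSM.Jint, intervalIntegral.integral_of_le hκu,
      ← MeasureTheory.integral_Icc_eq_integral_Ioc]
    rfl
  rw [hIcc, TSM.Hfun]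
  exact rfl


end
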